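/- Let (M; ∨, ∧, ⊕, ⊖, 0) be a wEMV-algebra without a top element. Then there exist a wEMV-algebra (N; ∨, ∧, ⊕, ⊖, 0) with a greatest element 1 and an injective map f : M → N preserving ∨, ∧, ⊕, ⊖ and 0, such that the image f(M) is a maximal ideal of N and every element of N is either equal to f(x) for some x ∈ M or equal to 1 ⊖ f(x) for some x ∈ M. -/

import Mathlib

universe u

class WEMV (M : Type u) extends DistribLattice M, Zero M where
  oplus : M → M → M
  ominus : M → M → M
  zero_le : ∀ x : M, 0 ≤ x
  oplus_comm : ∀ x y : M, oplus x y = oplus y x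
  oplus_assoc : ∀ x y z : M, oplus (oplus x y) z = oplus x (oplus y z)
  oplus_zero : ∀ x : M, oplus x 0 = x
  ominus_oplus_le : ∀ x y : M, ominus (oplus x y) x ≤ y
  oplus_ominus : ∀ x y : M, oplus x (ominus y x) = x ⊔ y
  ominus_inf : ∀ x y : M, ominus x (x ⊓ y) = ominus x y
  ominus_ominus : ∀ x z : M, ominus z (ominus z x) = x ⊓ z
  ominus_sup : ∀ x y z : M, ominus z (x ⊔ y) = ominus z x ⊓ ominus z y
  inf_ominus : ∀ x y z : M, ominus (x ⊓ y) z = ominus x z ⊓ ominus y z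
  ominus_oplus_assoc : ∀ x y z : M, ominus x (oplus y z) = ominus (ominus x y) z
  oplus_sup : ∀ x y z : M, oplus x (y ⊔ z) = oplus x y ⊔ oplus x z

open WEMV

def IsWEMVEmbedding {M : Type u} [WEMV M] {N : Type u} [WEMV N] (f : M → N) : Prop :=
  Function.Injective f ∧ f 0 = 0 ∧
  (∀ x y : M, f (x ⊔ y) = f x ⊔ f y) ∧
  (∀ x y : M, f (x ⊓ y) = f x ⊓ f y) ∧
  (∀ x y : M, f (oplus x y) = oplus (f x) (f y)) ∧
  (∀ x y : M, f (ominus x y) = ominus (f x) (f y))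

def IsIdeal {N : Type u} [WEMV N] (I : Set N) : Prop :=
  I.Nonempty ∧ (∀ x y : N, y ≤ x → x ∈ I → y ∈ I) ∧ ∀ x ∈ I, ∀ y ∈ I, oplus x y ∈ I

def IsMaximalIdeal {N : Type u} [WEMV N] (I : Set N) : Prop :=
  IsIdeal I ∧ I ≠ Set.univ ∧
  ∀ J : Set N, IsIdeal J → J ≠ Set.univ → I ⊆ J → I = J

def IsGreatestElt {N : Type u} [WEMV N] (one : N) : Prop := ∀ y : N, y ≤ one

/-!
Adjoin to `M` a formal complement `¬a` of every `a ∈ M` (the constructor `Doubling.neg`); the top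
element of `N = M ∪ ¬M` is `¬0`. The operations on `N` are the ones forced by the MV-algebra laws,
e.g. `¬a ⊕ b = ¬(a ⊖ b)`, `¬a ⊕ ¬b = ¬(a ⊙ b)`, `a ∨ ¬b = ¬(b ∧ ¬a)` and `¬a ⊖ ¬b = b ⊖ a`. They
only involve two operations that are already defined inside `M`: `x ∧ ¬y = (x ⊕ y) ⊖ y` (`andNot`)
and `a ⊙ b = a ⊖ (a ∧ ¬b)` (`odot`). Each wEMV-axiom of `N` therefore splits, according to which
arguments are complements, into an identity between these operations in `M`. Finally `M` is a
maximal ideal of `N`, because an ideal containing `¬b` and `b` contains `¬b ⊕ b = ¬0`.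
-/

-- `⊕` is taken by `Sum`.
infixl:70 " ∔ " => WEMV.oplus
infixl:70 " ∸ " => WEMV.ominus

namespace WEMV

variable {M : Type u} [WEMV M]

theorem zero_oplus (a : M) : 0 ∔ a = a := by rw [oplus_comm, oplus_zero]

theorem oplus_le_oplus_left {b c : M} (h : b ≤ c) (a : M) : a ∔ b ≤ a ∔ c :=
  le_sup_left.trans_eq (by rw [← oplus_sup, sup_eq_right.2 h])

theorem oplus_le_oplus_right {a b : M} (h : a ≤ b) (c : M) : a ∔ c ≤ b ∔ c := by
  rw [oplus_comm a, oplus_comm b]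
  exact oplus_le_oplus_left h c

theorem le_self_oplus (a b : M) : a ≤ a ∔ b := by
  simpa only [oplus_zero] using oplus_le_oplus_left (zero_le b) a

theorem le_oplus_self (a b : M) : a ≤ b ∔ a := by
  rw [oplus_comm]
  exact le_self_oplus a b

theorem ominus_self (a : M) : a ∸ a = 0 :=
  le_antisymm (by simpa only [oplus_zero] using ominus_oplus_le a 0) (zero_le _)

theorem ominus_zero (a : M) : a ∸ 0 = a := by
  simpa only [ominus_self, inf_idem] using ominus_ominus a a

theorem ominus_le_ominus_right {a b : M} (h : a ≤ b) (c : M) : a ∸ c ≤ b ∸ c :=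
  calc a ∸ c = (a ⊓ b) ∸ c := by rw [inf_eq_left.2 h]
    _ = a ∸ c ⊓ b ∸ c := inf_ominus a b c
    _ ≤ b ∸ c := inf_le_right

theorem ominus_le_ominus_left {b c : M} (h : b ≤ c) (a : M) : a ∸ c ≤ a ∸ b :=
  calc a ∸ c = a ∸ (b ⊔ c) := by rw [sup_eq_right.2 h]
    _ = a ∸ b ⊓ a ∸ c := ominus_sup b c a
    _ ≤ a ∸ b := inf_le_left

theorem ominus_le_iff {a b c : M} : a ∸ b ≤ c ↔ a ≤ b ∔ c :=
  ⟨fun h => calc a ≤ b ⊔ a := le_sup_right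
      _ = b ∔ (a ∸ b) := (oplus_ominus b a).symm
      _ ≤ b ∔ c := oplus_le_oplus_left h b,
   fun h => (ominus_le_ominus_right h b).trans (ominus_oplus_le b c)⟩

theorem le_oplus_ominus (a b : M) : a ≤ b ∔ (a ∸ b) := ominus_le_iff.1 le_rfl

theorem ominus_le_self (a b : M) : a ∸ b ≤ a := ominus_le_iff.2 (le_oplus_self a b)

theorem sup_ominus (a b c : M) : (a ⊔ b) ∸ c = a ∸ c ⊔ b ∸ c :=
  le_antisymm
    (ominus_le_iff.2 (sup_le ((le_oplus_ominus a c).trans (oplus_le_oplus_left le_sup_left c))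
      ((le_oplus_ominus b c).trans (oplus_le_oplus_left le_sup_right c))))
    (sup_le (ominus_le_ominus_right le_sup_left c) (ominus_le_ominus_right le_sup_right c))

theorem sup_ominus_left (a b : M) : (a ⊔ b) ∸ a = b ∸ a := by
  rw [sup_ominus, ominus_self, sup_eq_right.2 (zero_le _)]

theorem oplus_inf (a b c : M) : a ∔ (b ⊓ c) = a ∔ b ⊓ a ∔ c :=
  le_antisymm (le_inf (oplus_le_oplus_left inf_le_left a) (oplus_le_oplus_left inf_le_right a))
    (ominus_le_iff.1 (by
      rw [inf_ominus]
      exact inf_le_inf (ominus_oplus_le a b) (ominus_oplus_le a c)))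

theorem ominus_inf_distrib (a b c : M) : a ∸ (b ⊓ c) = a ∸ b ⊔ a ∸ c := by
  refine le_antisymm (ominus_le_iff.2 ?_)
    (sup_le (ominus_le_ominus_left inf_le_left a) (ominus_le_ominus_left inf_le_right a))
  rw [oplus_comm, oplus_inf, oplus_comm _ b, oplus_comm _ c]
  exact le_inf ((le_oplus_ominus a b).trans (oplus_le_oplus_left le_sup_left b))
    ((le_oplus_ominus a c).trans (oplus_le_oplus_left le_sup_right c))

def andNot (x y : M) : M := (x ∔ y) ∸ y

theorem andNot_le (x y : M) : andNot x y ≤ x := by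
  rw [andNot, oplus_comm]
  exact ominus_oplus_le y x

theorem oplus_andNot (x y : M) : y ∔ andNot x y = y ∔ x := by
  rw [andNot, oplus_ominus, sup_eq_right.2 (le_oplus_self y x), oplus_comm]

theorem andNot_zero (x : M) : andNot x 0 = x := by
  rw [andNot, oplus_zero, ominus_zero]

theorem zero_andNot (y : M) : andNot 0 y = 0 := by
  rw [andNot, zero_oplus, ominus_self]

theorem oplus_ominus_andNot (a b : M) : (a ∔ b) ∸ andNot b a = a := by
  rw [andNot, oplus_comm b, ominus_ominus, inf_eq_left.2 (le_self_oplus a b)]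

theorem andNot_andNot_self (a b : M) : andNot a (andNot b a) = a := by
  rw [andNot, oplus_andNot, oplus_ominus_andNot]

theorem andNot_of_le {x y : M} (h : x ≤ y) (b : M) : andNot x b = x ⊓ andNot y b := by
  have hz : (y ∔ b) ∸ (x ∔ b) = andNot y b ∸ x := by
    rw [oplus_comm x b, ominus_oplus_assoc, andNot]
  calc andNot x b = ((y ∔ b) ∸ ((y ∔ b) ∸ (x ∔ b))) ∸ b := by
        rw [ominus_ominus, inf_eq_left.2 (oplus_le_oplus_right h b), andNot]
    _ = (y ∔ b) ∸ (b ∔ (andNot y b ∸ x)) := by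
        rw [hz, ← ominus_oplus_assoc, oplus_comm (andNot y b ∸ x) b]
    _ = andNot y b ∸ (andNot y b ∸ x) := by rw [ominus_oplus_assoc, andNot]
    _ = x ⊓ andNot y b := ominus_ominus _ _

theorem andNot_ominus_self (y b : M) : andNot (y ∸ b) b = y ∸ b := by
  rw [andNot, oplus_comm, oplus_ominus, sup_ominus_left]

theorem andNot_eq_self_of_le_ominus {x y b : M} (h : x ≤ y ∸ b) : andNot x b = x := by
  rw [andNot_of_le h, andNot_ominus_self, inf_eq_left.2 h]

theorem andNot_le_andNot_right {x y : M} (h : x ≤ y) (b : M) : andNot x b ≤ andNot y b := by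
  rw [andNot_of_le h]
  exact inf_le_right

theorem andNot_le_andNot_left {a b : M} (h : a ≤ b) (c : M) : andNot c b ≤ andNot c a := by
  have hle : andNot c b ≤ (c ∔ b) ∸ a :=
    calc andNot c b = (c ∔ b) ∸ (a ⊔ b) := by rw [sup_eq_right.2 h, andNot]
      _ ≤ (c ∔ b) ∸ a := ominus_le_ominus_left le_sup_left _
  calc andNot c b = andNot (andNot c b) a := (andNot_eq_self_of_le_ominus hle).symm
    _ ≤ andNot c a := andNot_le_andNot_right (andNot_le c b) a

theorem andNot_andNot (c b a : M) : andNot (andNot c b) a = andNot c b ⊓ andNot c a :=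
  andNot_of_le (andNot_le c b) a

theorem andNot_inf_right_comm (b c a : M) : andNot b a ⊓ c = andNot (b ⊓ c) a := by
  rw [andNot_of_le inf_le_left, inf_right_comm, inf_eq_right.2 (andNot_le b a), inf_comm]

theorem inf_andNot_assoc (b c a : M) : andNot (b ⊓ c) a = b ⊓ andNot c a := by
  rw [inf_comm b c, ← andNot_inf_right_comm, inf_comm]

theorem sup_andNot (b c a : M) : andNot (b ⊔ c) a = andNot b a ⊔ andNot c a := by
  simp only [andNot, oplus_comm _ a, oplus_sup, sup_ominus]

theorem andNot_sup (c a b : M) : andNot c (a ⊔ b) = andNot c a ⊓ andNot c b := by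
  refine le_antisymm
    (le_inf (andNot_le_andNot_left le_sup_left c) (andNot_le_andNot_left le_sup_right c)) ?_
  set s := andNot c a ⊓ andNot c b
  have hsa : andNot s a = s := andNot_eq_self_of_le_ominus (y := c ∔ a) inf_le_left
  have hsb : andNot s b = s := andNot_eq_self_of_le_ominus (y := c ∔ b) inf_le_right
  calc s ≤ (s ∔ a ⊔ s ∔ b) ∸ a ⊓ (s ∔ a ⊔ s ∔ b) ∸ b :=
        le_inf (hsa.symm.le.trans (ominus_le_ominus_right le_sup_left a))
          (hsb.symm.le.trans (ominus_le_ominus_right le_sup_right b))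
    _ = andNot s (a ⊔ b) := by rw [andNot, oplus_sup, ominus_sup]
    _ ≤ andNot c (a ⊔ b) := andNot_le_andNot_right (inf_le_left.trans (andNot_le c a)) _

theorem andNot_inf (a b c : M) : andNot a (b ⊓ c) = andNot a b ⊔ andNot a c := by
  refine le_antisymm ?_
    (sup_le (andNot_le_andNot_left inf_le_left a) (andNot_le_andNot_left inf_le_right a))
  set x := andNot a (b ⊓ c)
  have hfix : andNot x (b ⊓ c) = x := andNot_eq_self_of_le_ominus (y := a ∔ (b ⊓ c)) le_rfl
  calc x = (x ∔ b ⊓ x ∔ c) ∸ b ⊔ (x ∔ b ⊓ x ∔ c) ∸ c := by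
        rw [← ominus_inf_distrib, ← oplus_inf]; exact hfix.symm
    _ ≤ andNot x b ⊔ andNot x c :=
        sup_le_sup (ominus_le_ominus_right inf_le_left b) (ominus_le_ominus_right inf_le_right c)
    _ ≤ andNot a b ⊔ andNot a c :=
        sup_le_sup (andNot_le_andNot_right (andNot_le a _) b) (andNot_le_andNot_right (andNot_le a _) c)

theorem andNot_andNot_right (a b c : M) : andNot a (andNot c b) = a ⊓ b ⊔ andNot a c := by
  set q := andNot c b
  refine le_antisymm ?_ (sup_le ?_ (andNot_le_andNot_left (andNot_le c b) a))
  · set x := andNot a q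
    have hx : x ≤ (x ∔ c) ∸ q :=
      calc x = andNot x q := (andNot_eq_self_of_le_ominus (y := a ∔ q) le_rfl).symm
        _ ≤ (x ∔ c) ∸ q := ominus_le_ominus_right (oplus_le_oplus_left (andNot_le c b) x) q
    have hxb : x ∸ b ≤ andNot x c ∸ b :=
      calc x ∸ b ≤ (x ∔ c) ∸ q ∸ b := ominus_le_ominus_right hx b
        _ = (x ∔ c) ∸ (b ∔ c) := by rw [← ominus_oplus_assoc, oplus_comm q b, oplus_andNot]
        _ = andNot x c ∸ b := by rw [oplus_comm b c, ominus_oplus_assoc, andNot]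
    have hx_le : x ≤ b ⊔ andNot a c :=
      calc x ≤ b ∔ (x ∸ b) := le_oplus_ominus x b
        _ ≤ b ∔ (andNot x c ∸ b) := oplus_le_oplus_left hxb b
        _ = b ⊔ andNot x c := oplus_ominus b _
        _ ≤ b ⊔ andNot a c := sup_le_sup_left (andNot_le_andNot_right (andNot_le a q) c) b
    calc x ≤ a ⊓ (b ⊔ andNot a c) := le_inf (andNot_le a q) hx_le
      _ = a ⊓ b ⊔ andNot a c := by rw [inf_sup_left, inf_eq_right.2 (andNot_le a c)]
  · have hab : a ⊓ b ≤ (b ∔ c) ∸ q := by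
      rw [oplus_ominus_andNot]
      exact inf_le_right
    calc a ⊓ b = andNot (a ⊓ b) q := (andNot_eq_self_of_le_ominus hab).symm
      _ ≤ andNot a q := andNot_le_andNot_right inf_le_left q

theorem andNot_ominus_oplus (a b c : M) : andNot (c ∸ a) (a ∔ b) = andNot c b ∸ a := by
  have h : (c ∸ a) ∔ (a ∔ b) = b ∔ a ⊔ b ∔ c := by
    rw [← oplus_assoc, oplus_comm _ a, oplus_ominus, oplus_comm, oplus_sup]
  rw [andNot, h, oplus_comm a b, sup_ominus_left, ominus_oplus_assoc, andNot, oplus_comm c b]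

theorem andNot_sup_andNot (a b c : M) : andNot (a ⊔ c) (andNot b a) = a ⊔ andNot c b := by
  rw [andNot_andNot_right, sup_andNot, inf_eq_right.2 le_sup_left, ← sup_assoc,
    sup_eq_left.2 (andNot_le a b)]

def odot (a b : M) : M := a ∸ andNot a b

theorem odot_comm (a b : M) : odot a b = odot b a := by
  have key : ∀ a b : M, (a ∔ b) ∸ (andNot b a ∔ andNot a b) = odot a b := fun a b => by
    rw [ominus_oplus_assoc, oplus_ominus_andNot, odot]
  rw [← key, oplus_comm a b, oplus_comm (andNot b a), key]

theorem odot_le_left (a b : M) : odot a b ≤ a := ominus_le_self _ _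

theorem odot_le_right (a b : M) : odot a b ≤ b := odot_comm a b ▸ odot_le_left b a

theorem ominus_odot_self (a b : M) : a ∸ odot a b = andNot a b := by
  rw [odot, ominus_ominus, inf_eq_left.2 (andNot_le a b)]

theorem odot_andNot (a b c : M) : odot a (andNot c b) = a ∸ b ⊓ odot a c := by
  rw [odot, andNot_andNot_right, ominus_sup, ominus_inf, odot]

theorem odot_inf (a b c : M) : odot a (b ⊓ c) = odot a b ⊓ odot a c := by
  rw [odot, andNot_inf, ominus_sup, odot, odot]

theorem odot_ominus_right_comm (a b c : M) : odot b c ∸ a = odot (b ∸ a) c := by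
  rw [odot, odot, andNot_of_le (ominus_le_self b a), ominus_inf, ← ominus_oplus_assoc,
    oplus_comm, ominus_oplus_assoc]

theorem odot_ominus_comm (a b c : M) : odot a (c ∸ b) = odot (a ∸ b) c := by
  rw [odot_comm, ← odot_ominus_right_comm, odot_comm, odot_ominus_right_comm]

theorem odot_assoc (a b c : M) : odot (odot a b) c = odot a (odot b c) := by
  have h : ∀ a c : M, odot (odot a b) c = b ∸ (andNot b a ∔ andNot b c) := fun a c => by
    rw [odot, andNot_of_le (odot_le_right a b), ominus_inf, odot_comm, odot, ominus_oplus_assoc]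
  rw [h, odot_comm a, odot_comm b c, h, oplus_comm]

end WEMV

theorem IsIdeal.eq_univ_of_greatest_mem {N : Type u} [WEMV N] {I : Set N} (hI : IsIdeal I)
    {one : N} (hone : IsGreatestElt one) (h : one ∈ I) : I = Set.univ :=
  Set.eq_univ_of_forall fun y => hI.2.1 one y (hone y) h

inductive Doubling (M : Type u) : Type u
  | of : M → Doubling M
  | neg : M → Doubling M

namespace Doubling

theorem neg_notMem_range_of {M : Type u} (a : M) : neg a ∉ Set.range (of : M → Doubling M) :=
  fun ⟨_, h⟩ => nomatch h

variable {M : Type u} [WEMV M]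

instance : Max (Doubling M) where
  max
    | of a, of b => of (a ⊔ b)
    | of a, neg b => neg (andNot b a)
    | neg a, of b => neg (andNot a b)
    | neg a, neg b => neg (a ⊓ b)

instance : Min (Doubling M) where
  min
    | of a, of b => of (a ⊓ b)
    | of a, neg b => of (andNot a b)
    | neg a, of b => of (andNot b a)
    | neg a, neg b => neg (a ⊔ b)

instance : Add (Doubling M) where
  add
    | of a, of b => of (a ∔ b)
    | of a, neg b => neg (b ∸ a)
    | neg a, of b => neg (a ∸ b)
    | neg a, neg b => neg (odot a b)

instance : Sub (Doubling M) where
  sub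
    | of a, of b => of (a ∸ b)
    | of a, neg b => of (odot a b)
    | neg a, of b => neg (a ∔ b)
    | neg a, neg b => of (b ∸ a)

instance : Zero (Doubling M) := ⟨of 0⟩

protected theorem sup_comm : ∀ x y : Doubling M, x ⊔ y = y ⊔ x
  | of a, of b => congrArg of (sup_comm a b)
  | of _, neg _ => rfl
  | neg _, of _ => rfl
  | neg a, neg b => congrArg neg (inf_comm a b)

protected theorem inf_comm : ∀ x y : Doubling M, x ⊓ y = y ⊓ x
  | of a, of b => congrArg of (inf_comm a b)
  | of _, neg _ => rfl
  | neg _, of _ => rfl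
  | neg a, neg b => congrArg neg (sup_comm a b)

protected theorem sup_assoc : ∀ x y z : Doubling M, x ⊔ y ⊔ z = x ⊔ (y ⊔ z)
  | of a, of b, of c => congrArg of (sup_assoc a b c)
  | of a, of b, neg c => congrArg neg (by rw [andNot_sup, andNot_andNot, inf_comm])
  | of a, neg b, of c => congrArg neg (by rw [andNot_andNot, andNot_andNot, inf_comm])
  | neg a, of b, of c => congrArg neg (by rw [andNot_andNot, andNot_sup])
  | of a, neg b, neg c => congrArg neg (andNot_inf_right_comm b c a)
  | neg a, of b, neg c =>
      congrArg neg ((andNot_inf_right_comm a c b).trans (inf_andNot_assoc a c b))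
  | neg a, neg b, of c => congrArg neg (inf_andNot_assoc a b c)
  | neg a, neg b, neg c => congrArg neg (inf_assoc a b c)

protected theorem inf_assoc : ∀ x y z : Doubling M, x ⊓ y ⊓ z = x ⊓ (y ⊓ z)
  | of a, of b, of c => congrArg of (inf_assoc a b c)
  | of a, of b, neg c => congrArg of (inf_andNot_assoc a b c)
  | of a, neg b, of c =>
      congrArg of ((andNot_inf_right_comm a c b).trans (inf_andNot_assoc a c b))
  | of a, neg b, neg c => congrArg of ((andNot_andNot a b c).trans (andNot_sup a b c).symm)
  | neg a, of b, of c => congrArg of (andNot_inf_right_comm b c a)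
  | neg a, of b, neg c => congrArg of (by rw [andNot_andNot, andNot_andNot, inf_comm])
  | neg a, neg b, of c => congrArg of (by rw [andNot_sup, andNot_andNot, inf_comm])
  | neg a, neg b, neg c => congrArg neg (sup_assoc a b c)

protected theorem sup_inf_self : ∀ x y : Doubling M, x ⊔ x ⊓ y = x
  | of _, of _ => congrArg of sup_inf_self
  | of a, neg b => congrArg of (sup_eq_left.2 (andNot_le a b))
  | neg a, of b => congrArg neg (andNot_andNot_self a b)
  | neg _, neg _ => congrArg neg inf_sup_self

protected theorem inf_sup_self : ∀ x y : Doubling M, x ⊓ (x ⊔ y) = x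
  | of _, of _ => congrArg of inf_sup_self
  | of a, neg b => congrArg of (andNot_andNot_self a b)
  | neg a, of b => congrArg neg (sup_eq_left.2 (andNot_le a b))
  | neg _, neg _ => congrArg neg sup_inf_self

instance : Lattice (Doubling M) :=
  Lattice.mk' Doubling.sup_comm Doubling.sup_assoc Doubling.inf_comm Doubling.inf_assoc
    Doubling.sup_inf_self Doubling.inf_sup_self

protected theorem inf_sup_left : ∀ x y z : Doubling M, x ⊓ (y ⊔ z) = x ⊓ y ⊔ x ⊓ z
  | of a, of b, of c => congrArg of (inf_sup_left a b c)
  | of a, of b, neg c => congrArg of (andNot_andNot_right a b c)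
  | of a, neg b, of c => congrArg of ((andNot_andNot_right a c b).trans (sup_comm _ _))
  | of a, neg b, neg c => congrArg of (andNot_inf a b c)
  | neg a, of b, of c => congrArg of (sup_andNot b c a)
  | neg a, of b, neg c => congrArg neg (andNot_sup_andNot a b c).symm
  | neg a, neg b, of c => congrArg neg (andNot_sup_andNot a c b).symm
  | neg a, neg b, neg c => congrArg neg (sup_inf_left a b c)

instance : DistribLattice (Doubling M) :=
  DistribLattice.ofInfSupLe fun x y z => (Doubling.inf_sup_left x y z).le

-- `Lattice.mk'` defines `x ≤ y` as `x ⊔ y = y`.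
theorem of_le_of {a b : M} : of a ≤ of b ↔ a ≤ b :=
  ⟨fun h => sup_eq_right.1 (of.inj h), fun h => congrArg of (sup_eq_right.2 h)⟩

protected theorem neg_le_neg {a b : M} : neg a ≤ neg b ↔ b ≤ a :=
  ⟨fun h => inf_eq_right.1 (neg.inj h), fun h => congrArg neg (inf_eq_right.2 h)⟩

theorem of_le_neg {a b : M} : of a ≤ neg b ↔ andNot b a = b :=
  ⟨fun h => neg.inj h, congrArg neg⟩

theorem not_neg_le_of {a b : M} : ¬neg a ≤ of b :=
  fun h => nomatch (h : neg (andNot a b) = of b)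

protected theorem zero_le : ∀ x : Doubling M, 0 ≤ x
  | of a => of_le_of.2 (zero_le a)
  | neg a => of_le_neg.2 (andNot_zero a)

protected theorem add_comm : ∀ x y : Doubling M, x + y = y + x
  | of a, of b => congrArg of (oplus_comm a b)
  | of _, neg _ => rfl
  | neg _, of _ => rfl
  | neg a, neg b => congrArg neg (odot_comm a b)

protected theorem add_assoc : ∀ x y z : Doubling M, x + y + z = x + (y + z)
  | of a, of b, of c => congrArg of (oplus_assoc a b c)
  | of a, of b, neg c => congrArg neg (by rw [oplus_comm, ominus_oplus_assoc])
  | of a, neg b, of c =>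
      congrArg neg (by rw [← ominus_oplus_assoc, ← ominus_oplus_assoc, oplus_comm])
  | neg a, of b, of c => congrArg neg (ominus_oplus_assoc a b c).symm
  | of a, neg b, neg c => congrArg neg (odot_ominus_right_comm a b c).symm
  | neg a, of b, neg c => congrArg neg (odot_ominus_comm a b c).symm
  | neg a, neg b, of c =>
      congrArg neg ((odot_ominus_right_comm c a b).trans (odot_ominus_comm a c b).symm)
  | neg a, neg b, neg c => congrArg neg (odot_assoc a b c)

protected theorem add_zero : ∀ x : Doubling M, x + 0 = x
  | of a => congrArg of (oplus_zero a)
  | neg a => congrArg neg (ominus_zero a)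

protected theorem add_sub_cancel_left_le : ∀ x y : Doubling M, x + y - x ≤ y
  | of a, of b => of_le_of.2 (ominus_oplus_le a b)
  | of a, neg b => Doubling.neg_le_neg.2 (by rw [oplus_comm]; exact le_oplus_ominus b a)
  | neg a, of b => of_le_of.2 ((ominus_ominus b a).trans_le inf_le_left)
  | neg a, neg b => of_le_neg.2 (by rw [ominus_odot_self]; exact andNot_andNot_self b a)

protected theorem add_sub : ∀ x y : Doubling M, x + (y - x) = x ⊔ y
  | of a, of b => congrArg of (oplus_ominus a b)
  | of _, neg _ => rfl
  | neg a, of b => congrArg neg (by rw [odot_comm, ominus_odot_self])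
  | neg a, neg b => congrArg neg ((ominus_ominus b a).trans (inf_comm b a))

protected theorem sub_inf_self : ∀ x y : Doubling M, x - x ⊓ y = x - y
  | of a, of b => congrArg of (ominus_inf a b)
  | of _, neg _ => rfl
  | neg a, of b => congrArg neg (oplus_andNot b a)
  | neg a, neg b => congrArg of (sup_ominus_left a b)

protected theorem sub_sub_self : ∀ x z : Doubling M, z - (z - x) = x ⊓ z
  | of b, of a => congrArg of (ominus_ominus b a)
  | of b, neg a => congrArg of (by rw [andNot, oplus_comm])
  | neg b, of a => congrArg of (ominus_odot_self a b)
  | neg b, neg a => congrArg neg ((oplus_ominus a b).trans (sup_comm a b))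

protected theorem sub_sup : ∀ x y z : Doubling M, z - (x ⊔ y) = (z - x) ⊓ (z - y)
  | of b, of c, of a => congrArg of (ominus_sup b c a)
  | of b, neg c, of a => congrArg of (odot_andNot a b c)
  | neg b, of c, of a => congrArg of ((odot_andNot a c b).trans (inf_comm _ _))
  | neg b, neg c, of a => congrArg of (odot_inf a b c)
  | of b, of c, neg a => congrArg neg (oplus_sup a b c)
  | of b, neg c, neg a => congrArg of (andNot_ominus_oplus a b c).symm
  | neg b, of c, neg a => congrArg of (andNot_ominus_oplus a c b).symm
  | neg b, neg c, neg a => congrArg of (inf_ominus b c a)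

protected theorem inf_sub : ∀ x y z : Doubling M, (x ⊓ y) - z = (x - z) ⊓ (y - z)
  | of a, of b, of c => congrArg of (inf_ominus a b c)
  | of a, of b, neg c => congrArg of (by rw [odot_comm, odot_inf, odot_comm c a, odot_comm c b])
  | of a, neg b, of c => congrArg of (by rw [oplus_comm b c, andNot_ominus_oplus])
  | of a, neg b, neg c => congrArg of (by rw [odot_comm, odot_andNot, odot_comm c a, inf_comm])
  | neg a, of b, of c => congrArg of (by rw [oplus_comm a c, andNot_ominus_oplus])
  | neg a, of b, neg c => congrArg of (by rw [odot_comm, odot_andNot, odot_comm c b])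
  | neg a, neg b, of c =>
      congrArg neg (by rw [oplus_comm, oplus_sup, oplus_comm c a, oplus_comm c b])
  | neg a, neg b, neg c => congrArg of (ominus_sup a b c)

protected theorem sub_add : ∀ x y z : Doubling M, x - (y + z) = x - y - z
  | of a, of b, of c => congrArg of (ominus_oplus_assoc a b c)
  | of a, of b, neg c => congrArg of (odot_ominus_comm a b c)
  | of a, neg b, of c => congrArg of (by rw [odot_comm, ← odot_ominus_right_comm, odot_comm])
  | of a, neg b, neg c => congrArg of (odot_assoc a b c).symm
  | neg a, of b, of c => congrArg neg (oplus_assoc a b c).symm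
  | neg a, of b, neg c => congrArg of (by rw [oplus_comm, ominus_oplus_assoc])
  | neg a, neg b, of c =>
      congrArg of (by rw [← ominus_oplus_assoc, ← ominus_oplus_assoc, oplus_comm])
  | neg a, neg b, neg c => congrArg of (odot_ominus_right_comm a b c)

protected theorem add_sup : ∀ x y z : Doubling M, x + (y ⊔ z) = (x + y) ⊔ (x + z)
  | of a, of b, of c => congrArg of (oplus_sup a b c)
  | of a, of b, neg c => congrArg neg (andNot_ominus_oplus a b c).symm
  | of a, neg b, of c => congrArg neg (andNot_ominus_oplus a c b).symm
  | of a, neg b, neg c => congrArg neg (inf_ominus b c a)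
  | neg a, of b, of c => congrArg neg (ominus_sup b c a)
  | neg a, of b, neg c => congrArg neg (odot_andNot a b c)
  | neg a, neg b, of c => congrArg neg ((odot_andNot a c b).trans (inf_comm _ _))
  | neg a, neg b, neg c => congrArg neg (odot_inf a b c)

instance : WEMV (Doubling M) where
  oplus := (· + ·)
  ominus := (· - ·)
  zero_le := Doubling.zero_le
  oplus_comm := Doubling.add_comm
  oplus_assoc := Doubling.add_assoc
  oplus_zero := Doubling.add_zero
  ominus_oplus_le := Doubling.add_sub_cancel_left_le
  oplus_ominus := Doubling.add_sub
  ominus_inf := Doubling.sub_inf_self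
  ominus_ominus := Doubling.sub_sub_self
  ominus_sup := Doubling.sub_sup
  inf_ominus := Doubling.inf_sub
  ominus_oplus_assoc := Doubling.sub_add
  oplus_sup := Doubling.add_sup

theorem isGreatestElt_neg_zero : IsGreatestElt (neg 0 : Doubling M)
  | of a => of_le_neg.2 (zero_andNot a)
  | neg a => Doubling.neg_le_neg.2 (zero_le a)

theorem isWEMVEmbedding_of : IsWEMVEmbedding (of : M → Doubling M) :=
  ⟨fun _ _ => of.inj, rfl, fun _ _ => rfl, fun _ _ => rfl, fun _ _ => rfl, fun _ _ => rfl⟩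

theorem neg_oplus_of_self (a : M) : neg a ∔ of a = neg 0 :=
  congrArg neg (ominus_self a)

theorem neg_zero_ominus_of (a : M) : neg 0 ∸ of a = neg a :=
  congrArg neg (zero_oplus a)

theorem isIdeal_range_of : IsIdeal (Set.range (of : M → Doubling M)) := by
  refine ⟨⟨of 0, 0, rfl⟩, ?_, ?_⟩
  · rintro _ (b | b) hle ⟨a, rfl⟩
    · exact ⟨b, rfl⟩
    · exact absurd hle not_neg_le_of
  · rintro _ ⟨a, rfl⟩ _ ⟨b, rfl⟩
    exact ⟨a ∔ b, rfl⟩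

theorem isMaximalIdeal_range_of : IsMaximalIdeal (Set.range (of : M → Doubling M)) := by
  refine ⟨isIdeal_range_of, fun h => neg_notMem_range_of 0 (h ▸ Set.mem_univ _),
    fun J hJ hJne hsub => hsub.antisymm ?_⟩
  rintro (b | b) hb
  · exact ⟨b, rfl⟩
  · have hone : neg 0 ∈ J := neg_oplus_of_self b ▸ hJ.2.2 _ hb _ (hsub ⟨b, rfl⟩)
    exact absurd (hJ.eq_univ_of_greatest_mem isGreatestElt_neg_zero hone) hJne

end Doubling

theorem stmt19_general (M : Type u) [WEMV M] :
    ∃ (N : Type u) (instN : WEMV N) (f : M → N) (one : N),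
      @IsGreatestElt N instN one ∧
      @IsWEMVEmbedding M _ N instN f ∧
      @IsMaximalIdeal N instN (Set.range f) ∧
      ∀ n : N, (∃ x : M, f x = n) ∨ ∃ x : M, n = ominus one (f x) :=
  ⟨Doubling M, inferInstance, Doubling.of, Doubling.neg 0, Doubling.isGreatestElt_neg_zero,
    Doubling.isWEMVEmbedding_of, Doubling.isMaximalIdeal_range_of, fun
      | .of a => Or.inl ⟨a, rfl⟩
      | .neg a => Or.inr ⟨a, (Doubling.neg_zero_ominus_of a).symm⟩⟩

theorem stmt19 (M : Type u) [WEMV M] (hnotop : ¬ ∃ t : M, ∀ x : M, x ≤ t) :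
    ∃ (N : Type u) (instN : WEMV N) (f : M → N) (one : N),
      @IsGreatestElt N instN one ∧
      @IsWEMVEmbedding M _ N instN f ∧
      @IsMaximalIdeal N instN (Set.range f) ∧
      ∀ n : N, (∃ x : M, f x = n) ∨ ∃ x : M, n = ominus one (f x) :=
  stmt19_general M
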